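/- arXiv:2502.02990 — 3 statements merged into one kernel-verified Lean document; each statement's English description precedes it below -/
import Mathlib

section
/- Let n ≥ 1 and let b_1,…,b_{2n} ∈ {0,1}. Let π be a uniformly random permutation of {1,…,2n} and set c_i = b_{π(i)}. For 0 ≤ i ≤ 2n let Y_i = |{j : i < j ≤ 2n and c_j = 0}|, and for 0 ≤ i ≤ n let X_i = Y_i/(2n−i) − Y_0/(2n). Then for every t ≥ 0, Pr[max_{1≤i≤n} |X_i| ≥ t] ≤ 2·exp(−t²·n/2). -/
/-!
Conditioned on the first `i` entries of the permuted sequence, entry `i + 1` is a zero with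
probability `q = Y_i / (2n - i)`, and `X_{i+1} - X_i = (q - [c_{i+1} = 0]) / (2n - i - 1)`.
So `X` is a martingale whose increments take two values at distance `1 / (2n - i - 1)`, and
Hoeffding's lemma bounds the conditional moment generating function of each increment by
`exp (λ² / (2 (2n - i - 1)²))`. Doob's maximal inequality, applied to `exp (λ X_i)` stopped when
it first crosses the threshold, gives `Pr[max X_i ≥ t] ≤ exp (λ² s / 2 - λ t)` with
`s = ∑_{k=n}^{2n-1} k⁻² ≤ 1 / n`; take `λ = n t` and apply the same bound to `-X`.

Conditioning is expressed through exchangeability: right multiplication by a transposition of two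
positions `≥ i` is a bijection of permutations that fixes every quantity depending only on the
first `i` entries.
-/

open Finset Real Equiv

lemma exp_mul_le_cosh_add_mul_sinh (μ x : ℝ) (h0 : -1 ≤ x) (h1 : x ≤ 1) :
    exp (μ * x) ≤ cosh μ + x * sinh μ := by
  have hconv := convexOn_exp.2 (Set.mem_univ (-μ)) (Set.mem_univ μ)
    (show 0 ≤ (1 - x) / 2 by linarith) (show 0 ≤ (1 + x) / 2 by linarith) (by ring)
  simp only [smul_eq_mul, show (1 - x) / 2 * -μ + (1 + x) / 2 * μ = μ * x by ring] at hconv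
  rw [cosh_eq, sinh_eq]
  linarith

lemma hoeffding_two_point (μ q : ℝ) (h0 : 0 ≤ q) (h1 : q ≤ 1) :
    q * exp (μ * (q - 1)) + (1 - q) * exp (μ * q) ≤ exp (μ ^ 2 / 2) := by
  have h₁ := exp_mul_le_cosh_add_mul_sinh μ (q - 1) (by linarith) (by linarith)
  have h₀ := exp_mul_le_cosh_add_mul_sinh μ q (by linarith) h1
  calc q * exp (μ * (q - 1)) + (1 - q) * exp (μ * q)
      ≤ q * (cosh μ + (q - 1) * sinh μ) + (1 - q) * (cosh μ + q * sinh μ) := by gcongr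
    _ = cosh μ := by ring
    _ ≤ exp (μ ^ 2 / 2) := cosh_le_exp_half_sq μ

lemma inv_sq_le_inv_sub_half_sub_inv_add_half {k : ℝ} (hk : 1 / 2 < k) :
    (k⁻¹) ^ 2 ≤ (k - 1 / 2)⁻¹ - (k + 1 / 2)⁻¹ := by
  have h : (k - 1 / 2)⁻¹ - (k + 1 / 2)⁻¹ = (k ^ 2 - 1 / 4)⁻¹ := by
    rw [inv_sub_inv (by linarith) (by linarith), show k + 1 / 2 - (k - 1 / 2) = 1 by ring,
      show (k - 1 / 2) * (k + 1 / 2) = k ^ 2 - 1 / 4 by ring, one_div]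
  rw [h, inv_pow]
  exact inv_anti₀ (by nlinarith) (by linarith)

lemma sum_range_inv_sub_sq_le {b : ℝ} {n : ℕ} (h : (n : ℝ) < b + 1 / 2) :
    ∑ j ∈ range n, ((b - j)⁻¹) ^ 2 ≤ (b - n + 1 / 2)⁻¹ - (b + 1 / 2)⁻¹ := by
  induction n with
  | zero => simp
  | succ n ih =>
    push_cast at h ⊢
    have step := inv_sq_le_inv_sub_half_sub_inv_add_half (k := b - n) (by linarith)
    rw [sum_range_succ, show b - (n + 1) + 1 / 2 = b - n - 1 / 2 by ring]
    linarith [ih (by linarith)]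

lemma sum_range_inv_sq_le (n : ℕ) : ∑ j ∈ range n, ((2 * n - j - 1 : ℝ)⁻¹) ^ 2 ≤ (n : ℝ)⁻¹ := by
  rcases Nat.lt_or_ge n 2 with hn | hn
  · interval_cases n <;> norm_num
  have hn' : (2 : ℝ) ≤ n := by exact_mod_cast hn
  have key := sum_range_inv_sub_sq_le (b := 2 * n - 1) (n := n) (by linarith)
  simp only [show ∀ j : ℝ, 2 * (n : ℝ) - 1 - j = 2 * n - j - 1 from fun j => by ring] at key
  refine key.trans ?_
  rw [show 2 * (n : ℝ) - n - 1 + 1 / 2 = n - 1 / 2 by ring,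
    show 2 * (n : ℝ) - 1 + 1 / 2 = 2 * n - 1 / 2 by ring,
    inv_sub_inv (by linarith) (by linarith), div_le_iff₀ (by nlinarith), inv_mul_eq_div,
    le_div_iff₀ (by linarith)]
  nlinarith

lemma Fin.card_filter_le_val {N : ℕ} (i : ℕ) : #{j : Fin N | i ≤ (j : ℕ)} = N - i := by
  have h := card_filter_add_card_filter_not (s := (univ : Finset (Fin N))) (fun j => (j : ℕ) < i)
  rw [Fin.card_filter_val_lt, card_univ, Fintype.card_fin] at h
  simp only [not_lt] at h
  omega

namespace PermSampling

variable {N : ℕ} (P : Fin N → Prop) [DecidablePred P]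

/-- Positions are `0`-based: `tailCount P σ i` is the paper's `Y_i`, the number of marked entries
`c_{i+1}, …, c_N`. -/
def tailCount (σ : Perm (Fin N)) (i : ℕ) : ℕ := #{j : Fin N | i ≤ (j : ℕ) ∧ P (σ j)}

noncomputable def deviation (σ : Perm (Fin N)) (i : ℕ) : ℝ :=
  tailCount P σ i / ((N : ℝ) - i) - tailCount P σ 0 / N

variable {P}

lemma tailCount_le (σ : Perm (Fin N)) (i : ℕ) : tailCount P σ i ≤ N - i :=
  (Fin.card_filter_le_val i) ▸ card_le_card (monotone_filter_right _ fun _ _ h => h.1)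

lemma tailCount_mul_swap (σ : Perm (Fin N)) {i : ℕ} {a b : Fin N} (ha : i ≤ a) (hb : i ≤ b) :
    tailCount P (σ * swap a b) i = tailCount P σ i := by
  refine card_equiv (swap a b) fun j => ?_
  have : i ≤ (j : ℕ) ↔ i ≤ (swap a b j : ℕ) := by
    rcases eq_or_ne j a with rfl | hja
    · simp [hb, ha]
    rcases eq_or_ne j b with rfl | hjb
    · simp [hb, ha]
    rw [swap_apply_of_ne_of_ne hja hjb]
  rw [mem_filter_univ, mem_filter_univ, Perm.mul_apply, this]

lemma deviation_mul_swap (σ : Perm (Fin N)) {i : ℕ} {a b : Fin N} (ha : i ≤ a) (hb : i ≤ b) :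
    deviation P (σ * swap a b) i = deviation P σ i := by
  simp only [deviation, tailCount_mul_swap σ ha hb,
    tailCount_mul_swap σ (Nat.zero_le a) (Nat.zero_le b)]

lemma tailCount_eq_succ_add (σ : Perm (Fin N)) {i : ℕ} (hi : i < N) :
    tailCount P σ i = tailCount P σ (i + 1) + if P (σ ⟨i, hi⟩) then 1 else 0 := by
  have h (j : Fin N) : (if i ≤ (j : ℕ) ∧ P (σ j) then 1 else 0) =
      (if i + 1 ≤ (j : ℕ) ∧ P (σ j) then 1 else 0) + if j = ⟨i, hi⟩ ∧ P (σ j) then 1 else 0 := by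
    rcases eq_or_ne j ⟨i, hi⟩ with rfl | hj
    · simp
    · have : i ≤ (j : ℕ) ↔ i + 1 ≤ (j : ℕ) := by
        have : (j : ℕ) ≠ i := fun h => hj (Fin.ext h)
        omega
      simp [hj, this]
  simp only [tailCount, card_filter, h, sum_add_distrib, ite_and, sum_ite_eq', mem_univ, if_true]

lemma cast_tailCount (σ : Perm (Fin N)) (i : ℕ) :
    (tailCount P σ i : ℝ) = ∑ k ∈ {k : Fin N | i ≤ (k : ℕ)}, if P (σ k) then 1 else 0 := by
  rw [tailCount, ← filter_filter, card_filter]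
  push_cast
  rfl

lemma deviation_succ (σ : Perm (Fin N)) {i : ℕ} (hi : i + 1 < N) :
    deviation P σ (i + 1) = deviation P σ i +
      (tailCount P σ i / ((N : ℝ) - i) - if P (σ ⟨i, by omega⟩) then 1 else 0) /
        ((N : ℝ) - i - 1) := by
  have hY := congrArg (Nat.cast : ℕ → ℝ) (tailCount_eq_succ_add (P := P) σ (i := i) (by omega))
  have hlt : (i : ℝ) + 1 < N := by exact_mod_cast hi
  push_cast at hY
  simp only [deviation, hY]
  rw [show (N : ℝ) - ((i + 1 : ℕ) : ℝ) = N - i - 1 by push_cast; ring]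
  field_simp [show (N : ℝ) - i - 1 ≠ 0 by linarith, show (N : ℝ) - i ≠ 0 by linarith]
  ring

/-- `f σ` depends only on `σ 0, …, σ (i - 1)`: it is unchanged by reordering the later entries. -/
def DependsOnPrefix (i : ℕ) (f : Perm (Fin N) → ℝ) : Prop :=
  ∀ σ (a b : Fin N), i ≤ a → i ≤ b → f (σ * swap a b) = f σ

/-- Exchangeability: against weights that do not see the order of the entries at positions `≥ i`,
position `i` is marked with probability `tailCount P σ i / (N - i)`. -/
lemma sum_mul_indicator_eq (f : Perm (Fin N) → ℝ) {i : ℕ} (hi : i < N) (hf : DependsOnPrefix i f) :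
    ∑ σ, f σ * (if P (σ ⟨i, hi⟩) then 1 else 0) = ∑ σ, f σ * (tailCount P σ i / ((N : ℝ) - i)) := by
  have hk : ∀ k : Fin N, i ≤ k → ∑ σ, f σ * (if P (σ ⟨i, hi⟩) then 1 else 0) =
      ∑ σ, f σ * (if P (σ k) then 1 else 0) := fun k hik =>
    Fintype.sum_equiv (Equiv.mulRight (swap ⟨i, hi⟩ k)) _ _ fun σ => by
      simp [hf σ ⟨i, hi⟩ k le_rfl hik]
  have hm : (N : ℝ) - i ≠ 0 := by
    have : (i : ℝ) < N := by exact_mod_cast hi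
    linarith
  simp_rw [mul_div_assoc', ← sum_div]
  rw [eq_div_iff hm, mul_comm]
  calc ((N : ℝ) - i) * ∑ σ, f σ * (if P (σ ⟨i, hi⟩) then 1 else 0)
      = ∑ k ∈ {k : Fin N | i ≤ (k : ℕ)}, ∑ σ, f σ * (if P (σ ⟨i, hi⟩) then 1 else 0) := by
        rw [sum_const, Fin.card_filter_le_val, nsmul_eq_mul, Nat.cast_sub hi.le]
    _ = ∑ k ∈ {k : Fin N | i ≤ (k : ℕ)}, ∑ σ, f σ * (if P (σ k) then 1 else 0) :=
        sum_congr rfl fun k hk' => hk k (mem_filter_univ k |>.1 hk')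
    _ = ∑ σ, f σ * tailCount P σ i := by
        simp_rw [cast_tailCount, mul_sum]
        exact sum_comm

/-- Hoeffding's lemma for the conditional law of the increment `X_{i+1} - X_i`; the weights `w`
play the role of the conditioning on the first `i` entries. -/
lemma sum_mul_exp_deviation_succ_sub_le (w : Perm (Fin N) → ℝ) (hw0 : ∀ σ, 0 ≤ w σ) {i : ℕ}
    (hw : DependsOnPrefix i w) (hi : i + 1 < N) (l : ℝ) :
    ∑ σ, w σ * exp (l * (deviation P σ (i + 1) - deviation P σ i)) ≤
      exp (l ^ 2 / 2 * ((N : ℝ) - i - 1)⁻¹ ^ 2) * ∑ σ, w σ := by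
  set μ := l / ((N : ℝ) - i - 1)
  set q : Perm (Fin N) → ℝ := fun σ => tailCount P σ i / ((N : ℝ) - i)
  have hm : (0 : ℝ) < N - i := by
    have : (i : ℝ) + 1 < N := by exact_mod_cast hi
    linarith
  have hq0 σ : 0 ≤ q σ := div_nonneg (Nat.cast_nonneg _) hm.le
  have hq1 σ : q σ ≤ 1 := by
    rw [div_le_one hm, ← Nat.cast_sub (by omega)]
    exact_mod_cast tailCount_le σ i
  have hexp σ : exp (l * (deviation P σ (i + 1) - deviation P σ i)) =
      exp (μ * q σ) + (exp (μ * (q σ - 1)) - exp (μ * q σ)) *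
        if P (σ ⟨i, by omega⟩) then 1 else 0 := by
    rw [deviation_succ σ hi, add_sub_cancel_left]
    split_ifs
    · rw [mul_one, add_sub_cancel]
      congr 1
      ring
    · rw [mul_zero, add_zero]
      congr 1
      ring
  have hf : DependsOnPrefix i fun σ => w σ * (exp (μ * (q σ - 1)) - exp (μ * q σ)) := by
    intro σ a b ha hb
    simp only [q, hw σ a b ha hb, tailCount_mul_swap σ ha hb]
  calc ∑ σ, w σ * exp (l * (deviation P σ (i + 1) - deviation P σ i))
      = ∑ σ, w σ * exp (μ * q σ) + ∑ σ, w σ * (exp (μ * (q σ - 1)) - exp (μ * q σ)) *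
          if P (σ ⟨i, by omega⟩) then 1 else 0 := by
        simp only [hexp, mul_add, sum_add_distrib, mul_assoc]
    _ = ∑ σ, w σ * (q σ * exp (μ * (q σ - 1)) + (1 - q σ) * exp (μ * q σ)) := by
        rw [sum_mul_indicator_eq _ _ hf, ← sum_add_distrib]
        exact sum_congr rfl fun σ _ => by ring
    _ ≤ ∑ σ, w σ * exp (μ ^ 2 / 2) :=
        sum_le_sum fun σ _ =>
          mul_le_mul_of_nonneg_left (hoeffding_two_point μ _ (hq0 σ) (hq1 σ)) (hw0 σ)
    _ = exp (l ^ 2 / 2 * ((N : ℝ) - i - 1)⁻¹ ^ 2) * ∑ σ, w σ := by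
        rw [← sum_mul, mul_comm]
        congr 2
        ring

open scoped Classical in
variable (P) in
noncomputable def stoppedExp (l c : ℝ) (σ : Perm (Fin N)) (i : ℕ) : ℝ :=
  if ∃ k ∈ Icc 1 i, c ≤ l * deviation P σ k then exp c else exp (l * deviation P σ i)

lemma stoppedExp_nonneg (l c : ℝ) (σ : Perm (Fin N)) (i : ℕ) : 0 ≤ stoppedExp P l c σ i := by
  unfold stoppedExp
  split_ifs <;> positivity

lemma sum_stoppedExp_succ_le (l c : ℝ) {i : ℕ} (hi : i + 1 < N) :
    ∑ σ, stoppedExp P l c σ (i + 1) ≤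
      exp (l ^ 2 / 2 * ((N : ℝ) - i - 1)⁻¹ ^ 2) * ∑ σ, stoppedExp P l c σ i := by
  set K := exp (l ^ 2 / 2 * ((N : ℝ) - i - 1)⁻¹ ^ 2)
  set hit : Perm (Fin N) → Prop := fun σ => ∃ k ∈ Icc 1 i, c ≤ l * deviation P σ k
  set w : Perm (Fin N) → ℝ := fun σ => if hit σ then 0 else exp (l * deviation P σ i)
  have hw : DependsOnPrefix i w := by
    intro σ a b ha hb
    have hhit : hit (σ * swap a b) ↔ hit σ := exists_congr fun k => and_congr_right fun hk => by
      rw [deviation_mul_swap σ ((mem_Icc.1 hk).2.trans ha) ((mem_Icc.1 hk).2.trans hb)]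
    simp only [w, hhit, deviation_mul_swap σ ha hb]
  have hsucc σ : stoppedExp P l c σ (i + 1) ≤ (if hit σ then exp c else 0) +
      w σ * exp (l * (deviation P σ (i + 1) - deviation P σ i)) := by
    by_cases h : hit σ
    · have h' : ∃ k ∈ Icc 1 (i + 1), c ≤ l * deviation P σ k :=
        let ⟨k, hk, hc⟩ := h
        ⟨k, Icc_subset_Icc_right (by omega) hk, hc⟩
      simp only [stoppedExp, if_pos h', w, if_pos h, zero_mul, add_zero, le_refl]
    rw [if_neg h, zero_add, show w σ = exp (l * deviation P σ i) from if_neg h, ← exp_add,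
      ← mul_add, add_sub_cancel, stoppedExp]
    split_ifs with h'
    · obtain ⟨k, hk, hc⟩ := h'
      obtain rfl : k = i + 1 := by
        by_contra hne
        exact h ⟨k, mem_Icc.2 ⟨(mem_Icc.1 hk).1, by have := (mem_Icc.1 hk).2; omega⟩, hc⟩
      exact exp_le_exp.2 hc
    · exact le_rfl
  have hcur σ : stoppedExp P l c σ i = (if hit σ then exp c else 0) + w σ := by
    simp only [stoppedExp, w, hit]
    split_ifs <;> simp
  have hK : 1 ≤ K := one_le_exp (by positivity)
  calc ∑ σ, stoppedExp P l c σ (i + 1)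
      ≤ ∑ σ, (if hit σ then exp c else 0) +
          ∑ σ, w σ * exp (l * (deviation P σ (i + 1) - deviation P σ i)) := by
        rw [← sum_add_distrib]
        exact sum_le_sum fun σ _ => hsucc σ
    _ ≤ K * ∑ σ, (if hit σ then exp c else 0) + K * ∑ σ, w σ := by
        gcongr
        · exact le_mul_of_one_le_left (sum_nonneg fun σ _ => by positivity) hK
        · exact sum_mul_exp_deviation_succ_sub_le w (fun σ => by positivity) hw hi l
    _ = K * ∑ σ, stoppedExp P l c σ i := by
        rw [← mul_add, ← sum_add_distrib, sum_congr rfl fun σ _ => hcur σ]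

lemma sum_stoppedExp_le (l c : ℝ) {n : ℕ} (hn : n < N) :
    ∑ σ, stoppedExp P l c σ n ≤ exp (l ^ 2 / 2 * ∑ j ∈ range n, ((N : ℝ) - j - 1)⁻¹ ^ 2) *
      #(univ : Finset (Perm (Fin N))) := by
  induction n with
  | zero => simp [stoppedExp, deviation]
  | succ n ih =>
    calc ∑ σ, stoppedExp P l c σ (n + 1)
        ≤ exp (l ^ 2 / 2 * ((N : ℝ) - n - 1)⁻¹ ^ 2) * ∑ σ, stoppedExp P l c σ n :=
          sum_stoppedExp_succ_le l c hn
      _ ≤ exp (l ^ 2 / 2 * ((N : ℝ) - n - 1)⁻¹ ^ 2) *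
            (exp (l ^ 2 / 2 * ∑ j ∈ range n, ((N : ℝ) - j - 1)⁻¹ ^ 2) *
              #(univ : Finset (Perm (Fin N)))) := by
          gcongr
          exact ih (by omega)
      _ = _ := by rw [← mul_assoc, ← exp_add, sum_range_succ, mul_add, add_comm]

open scoped Classical in
/-- Doob's maximal inequality for the exponential supermartingale `exp (l * deviation P σ i)`. -/
lemma card_exists_le_mul_deviation_mul_exp_le (l c : ℝ) {n : ℕ} (hn : n < N) :
    (#{σ : Perm (Fin N) | ∃ k ∈ Icc 1 n, c ≤ l * deviation P σ k} : ℝ) * exp c ≤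
      exp (l ^ 2 / 2 * ∑ j ∈ range n, ((N : ℝ) - j - 1)⁻¹ ^ 2) *
        #(univ : Finset (Perm (Fin N))) := by
  calc (#{σ : Perm (Fin N) | ∃ k ∈ Icc 1 n, c ≤ l * deviation P σ k} : ℝ) * exp c
      = ∑ σ ∈ {σ : Perm (Fin N) | ∃ k ∈ Icc 1 n, c ≤ l * deviation P σ k},
          stoppedExp P l c σ n := by
        rw [sum_congr rfl fun σ hσ => by rw [stoppedExp, if_pos (by simpa using hσ)],
          sum_const, nsmul_eq_mul]
    _ ≤ ∑ σ, stoppedExp P l c σ n :=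
        sum_le_sum_of_subset_of_nonneg (subset_univ _) fun σ _ _ => stoppedExp_nonneg l c σ n
    _ ≤ _ := sum_stoppedExp_le l c hn

open scoped Classical in
lemma card_exists_le_abs_deviation_le {n : ℕ} (hn : n < N) (t : ℝ) {l : ℝ} (hl : 0 ≤ l) :
    (#{σ : Perm (Fin N) | ∃ k ∈ Icc 1 n, t ≤ |deviation P σ k|} : ℝ) ≤
      2 * exp (l ^ 2 / 2 * ∑ j ∈ range n, ((N : ℝ) - j - 1)⁻¹ ^ 2 - l * t) *
        #(univ : Finset (Perm (Fin N))) := by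
  have hsplit : ({σ | ∃ k ∈ Icc 1 n, t ≤ |deviation P σ k|} : Finset (Perm (Fin N))) ⊆
      ({σ | ∃ k ∈ Icc 1 n, l * t ≤ l * deviation P σ k} : Finset (Perm (Fin N))) ∪
        ({σ | ∃ k ∈ Icc 1 n, l * t ≤ -l * deviation P σ k} : Finset (Perm (Fin N))) := by
    intro σ hσ
    simp only [mem_filter_univ, mem_union] at hσ ⊢
    obtain ⟨k, hk, hkt⟩ := hσ
    rcases le_abs.1 hkt with h | h
    · exact .inl ⟨k, hk, mul_le_mul_of_nonneg_left h hl⟩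
    · exact .inr ⟨k, hk, by rw [neg_mul, ← mul_neg]; exact mul_le_mul_of_nonneg_left h hl⟩
  have hpos := card_exists_le_mul_deviation_mul_exp_le (P := P) l (l * t) hn
  have hneg := card_exists_le_mul_deviation_mul_exp_le (P := P) (-l) (l * t) hn
  rw [neg_sq] at hneg
  have hcard := (card_le_card hsplit).trans (card_union_le _ _)
  rw [exp_sub, mul_div_assoc', div_mul_eq_mul_div, le_div_iff₀ (exp_pos _)]
  calc (#{σ : Perm (Fin N) | ∃ k ∈ Icc 1 n, t ≤ |deviation P σ k|} : ℝ) * exp (l * t)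
      ≤ (#{σ : Perm (Fin N) | ∃ k ∈ Icc 1 n, l * t ≤ l * deviation P σ k} +
          #{σ : Perm (Fin N) | ∃ k ∈ Icc 1 n, l * t ≤ -l * deviation P σ k}) * exp (l * t) := by
        gcongr
        exact_mod_cast hcard
    _ ≤ 2 * exp (l ^ 2 / 2 * ∑ j ∈ range n, ((N : ℝ) - j - 1)⁻¹ ^ 2) *
          #(univ : Finset (Perm (Fin N))) := by
        linarith

end PermSampling

open scoped Classical in
/-- maximal deviation of the running zero-fraction under a uniformly
random permutation. -/
theorem stmt_0 (n : ℕ) (hn : 1 ≤ n) (b : Fin (2 * n) → Fin 2) (t : ℝ) (ht : 0 ≤ t) :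
    let Y : Equiv.Perm (Fin (2 * n)) → ℕ → ℕ := fun σ i =>
      (Finset.univ.filter (fun j : Fin (2 * n) => i ≤ (j : ℕ) ∧ b (σ j) = 0)).card
    let X : Equiv.Perm (Fin (2 * n)) → ℕ → ℝ := fun σ i =>
      (Y σ i : ℝ) / (2 * (n : ℝ) - i) - (Y σ 0 : ℝ) / (2 * (n : ℝ))
    ((Finset.univ.filter (fun σ : Equiv.Perm (Fin (2 * n)) =>
        ∃ i ∈ Finset.Icc 1 n, t ≤ |X σ i|)).card : ℝ) /
      ((Finset.univ : Finset (Equiv.Perm (Fin (2 * n)))).card : ℝ)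
      ≤ 2 * Real.exp (-(t ^ 2) * n / 2) := by
  intro Y X
  have hX σ i : X σ i = PermSampling.deviation (b · = 0) σ i := by
    simp only [X, Y, PermSampling.deviation, PermSampling.tailCount]
    push_cast
    rfl
  have hbound := PermSampling.card_exists_le_abs_deviation_le (P := (b · = 0))
    (show n < 2 * n by omega) t (show 0 ≤ n * t by positivity)
  simp only [← hX] at hbound
  rw [div_le_iff₀ (by simp [Fintype.card_pos])]
  refine (le_of_eq ?_).trans (hbound.trans ?_)
  · congr
  refine mul_le_mul_of_nonneg_right (mul_le_mul_of_nonneg_left (exp_le_exp.2 ?_) two_pos.le)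
    (Nat.cast_nonneg _)
  calc (n * t) ^ 2 / 2 * ∑ j ∈ range n, (((2 * n : ℕ) : ℝ) - j - 1)⁻¹ ^ 2 - n * t * t
      ≤ (n * t) ^ 2 / 2 * (n : ℝ)⁻¹ - n * t * t := by
        push_cast
        gcongr
        exact sum_range_inv_sq_le n
    _ = -t ^ 2 * n / 2 := by
        field_simp
        ring
end

section
/- Let B ≥ 2, let n = 2n' be even, let x_1,…,x_n ∈ {1,…,B}, let π be a uniformly random permutation of {1,…,n}, and set y_i = x_{π(i)}. For 0 ≤ t < n and j ∈ {1,…,B} define p_j^t = |{i : t < i ≤ n, y_i ≤ j}|/(n−t). Then for every α > 0, Pr[ there exist j ∈ {1,…,B} and 0 ≤ t ≤ n/2 with |p_j^t − p_j^0| ≥ α ] ≤ 2B·exp(−α²·n/2). In particular, if n ≥ C·(log B)/α² for a sufficiently large universal constant C, then with high probability in B, |p_j^t − p_j^0| ≤ α simultaneously for all 0 ≤ t ≤ n/2 and all j ∈ {1,…,B}. -/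
/-!
Fix `j` and let `v i = [y_i ≤ j]`. Composing with a uniformly random permutation makes `v` a
uniformly random `0/1` sequence with as many ones as the data, so it suffices to count such
sequences. The fraction `p^t` of ones among the last `n - t` entries is a reverse martingale:
dropping the first of `k + 1` remaining entries moves it by a centred Bernoulli step of range
`1/k`. By Hoeffding's lemma `exp (s p^t - (s²/8) ∑ k⁻²)` is then a supermartingale, and its maximal
inequality, proved by induction on the length of the sequence, bounds the upper deviation by
`exp (-2α²n')` for `s = 4αn'`. Flipping all bits gives the lower deviation, and a union bound over
`j` and the two tails gives `2B exp (-α²n) ≤ 2B exp (-α²n/2)`.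
-/

open Finset

open scoped Classical

/-- The empirical CDF at point `j ∈ {1,…,B}` (encoded as `j : Fin B`) of the last
`n - t` elements of the dataset `x` permuted by `σ`; here `n = 2 * n'`. -/
noncomputable def pCDF (B n' : ℕ) (x : Fin (2 * n') → Fin B)
    (σ : Equiv.Perm (Fin (2 * n'))) (t : ℕ) (j : Fin B) : ℝ :=
  ((Finset.univ.filter
      (fun i : Fin (2 * n') => t ≤ (i : ℕ) ∧ ((x (σ i)) : ℕ) ≤ (j : ℕ))).card : ℝ) /
    (2 * (n' : ℝ) - t)

/-- The probability, over a uniformly random permutation of the dataset, that some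
CDF value `p_j^t` with `t ≤ n/2` deviates by at least `α` from `p_j^0`. -/
noncomputable def badProb (B n' : ℕ) (x : Fin (2 * n') → Fin B) (α : ℝ) : ℝ :=
  ((Finset.univ.filter (fun σ : Equiv.Perm (Fin (2 * n')) =>
      ∃ j : Fin B, ∃ t ≤ n', α ≤ |pCDF B n' x σ t j - pCDF B n' x σ 0 j|)).card : ℝ) /
    ((Finset.univ : Finset (Equiv.Perm (Fin (2 * n')))).card : ℝ)

open Real

open MeasureTheory ProbabilityTheory unitInterval in
lemma bernoulli_mgf_le {p : ℝ} (hp₀ : 0 ≤ p) (hp₁ : p ≤ 1) (t : ℝ) :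
    p * exp (t * (1 - p)) + (1 - p) * exp (t * -p) ≤ exp (t ^ 2 / 8) := by
  let X : Bool → ℝ := fun b => if b then 1 else 0
  let μ : Measure Bool := Ber(true, false, ⟨p, hp₀, hp₁⟩)
  have hX := hasSubgaussianMGF_of_mem_Icc (μ := μ) (X := X) (a := 0) (b := 1)
    Measurable.of_discrete.aemeasurable (ae_of_all _ fun b => by cases b <;> simp [X])
  have hmean : μ[X] = p := by simp [μ, integral_bernoulliMeasure, X]
  have h := hX.mgf_le t
  simp only [mgf, hmean, μ, integral_bernoulliMeasure, X] at h
  convert h using 1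
  · simp
  · norm_num; ring_nf

/-- The Chernoff factor `exp (s (m/n - θ))` for the fraction of ones to climb from `m/n` to `θ`,
times the Hoeffding factors `exp (s²/(8k²))` of the first `T` removals, made from `k + 1 = n - u`
remaining entries. -/
noncomputable def maximalBound (s θ : ℝ) (n m T : ℕ) : ℝ :=
  n.choose m * exp (s * (m / n - θ) + s ^ 2 / 8 * ∑ u ∈ range T, 1 / ((n : ℝ) - 1 - u) ^ 2)

lemma sum_range_succ_inv_sq (n T : ℕ) :
    ∑ u ∈ range (T + 1), 1 / (((n + 1 : ℕ) : ℝ) - 1 - u) ^ 2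
      = ∑ u ∈ range T, 1 / ((n : ℝ) - 1 - u) ^ 2 + 1 / (n : ℝ) ^ 2 := by
  rw [sum_range_succ']
  push_cast
  congr 1
  · refine sum_congr rfl fun u _ => ?_
    ring_nf
  · ring_nf

lemma maximalBound_nonneg (s θ : ℝ) (n m T : ℕ) : 0 ≤ maximalBound s θ n m T := by
  unfold maximalBound; positivity

lemma choose_le_maximalBound {s θ : ℝ} (hs : 0 ≤ s) {n m : ℕ} (hθ : θ ≤ m / n) (T : ℕ) :
    (n.choose m : ℝ) ≤ maximalBound s θ n m T := by
  refine le_mul_of_one_le_right (Nat.cast_nonneg _) (one_le_exp ?_)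
  have : 0 ≤ s * (m / n - θ) := mul_nonneg hs (sub_nonneg.2 hθ)
  have : 0 ≤ ∑ u ∈ range T, 1 / ((n : ℝ) - 1 - u) ^ 2 := sum_nonneg fun _ _ => by positivity
  positivity

lemma maximalBound_zero_le (s θ : ℝ) (n T : ℕ) :
    maximalBound s θ n 0 T ≤ maximalBound s θ (n + 1) 0 (T + 1) := by
  unfold maximalBound
  rw [sum_range_succ_inv_sq]
  simp only [Nat.choose_zero_right, Nat.cast_zero, zero_div, Nat.cast_one, one_mul]
  gcongr
  simp only [le_add_iff_nonneg_right]
  positivity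

lemma cast_choose_eq_div_mul (n m : ℕ) :
    (n.choose m : ℝ) = (m + 1) / (n + 1) * (n + 1).choose (m + 1) := by
  have h := congrArg (Nat.cast (R := ℝ)) (Nat.add_one_mul_choose_eq n m)
  push_cast at h
  rw [div_mul_eq_mul_div, eq_div_iff (by positivity)]
  linarith

/-- The supermartingale step: the bound for `n + 1` entries dominates the mixture of the bounds
for the remaining `n`, weighted by `p = (m+1)/(n+1)`, the chance that the dropped entry is `true`;
Hoeffding's lemma controls that mixture. -/
lemma maximalBound_add_maximalBound_le (s θ : ℝ) {n : ℕ} (hn : 0 < n) (m T : ℕ) :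
    maximalBound s θ n m T + maximalBound s θ n (m + 1) T
      ≤ maximalBound s θ (n + 1) (m + 1) (T + 1) := by
  rcases lt_or_ge n m with hnm | hmn
  · have h₀ : ∀ k, n < k → maximalBound s θ n k T = 0 := fun k hk => by
      simp [maximalBound, Nat.choose_eq_zero_of_lt hk]
    rw [h₀ m hnm, h₀ (m + 1) (by omega), add_zero]
    exact maximalBound_nonneg s θ _ _ _
  obtain ⟨E, hE⟩ : ∃ E, E = ∑ u ∈ range T, 1 / ((n : ℝ) - 1 - u) ^ 2 := ⟨_, rfl⟩
  obtain ⟨p, hp⟩ : ∃ p : ℝ, p = (m + 1) / (n + 1) := ⟨_, rfl⟩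
  obtain ⟨D, hD⟩ : ∃ D, D = s * ((m + 1) / (n + 1) - θ) + s ^ 2 / 8 * E := ⟨_, rfl⟩
  have hn' : (0 : ℝ) < n := by exact_mod_cast hn
  have hmn' : (m : ℝ) ≤ n := by exact_mod_cast hmn
  have hp₀ : 0 ≤ p := by rw [hp]; positivity
  have hp₁ : p ≤ 1 := by rw [hp, div_le_one (by positivity)]; linarith
  have hA : (n.choose m : ℝ) = p * (n + 1).choose (m + 1) := hp ▸ cast_choose_eq_div_mul n m
  have hB : (n.choose (m + 1) : ℝ) = (1 - p) * (n + 1).choose (m + 1) := by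
    have : ((n + 1).choose (m + 1) : ℝ) = n.choose m + n.choose (m + 1) := by
      exact_mod_cast Nat.choose_succ_succ n m
    rw [sub_mul, one_mul]; linarith
  have e₁ : s * (m / n - θ) + s ^ 2 / 8 * E = -(s / n) * (1 - p) + D := by
    rw [hp, hD]; field_simp; ring
  have e₂ : s * ((m + 1 : ℕ) / n - θ) + s ^ 2 / 8 * E = -(s / n) * -p + D := by
    rw [hp, hD]; push_cast; field_simp; ring
  have e₃ : s * ((m + 1 : ℕ) / (n + 1 : ℕ) - θ) + s ^ 2 / 8 * (E + 1 / n ^ 2)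
      = (-(s / n)) ^ 2 / 8 + D := by
    rw [hD]; push_cast; field_simp; ring
  unfold maximalBound
  rw [sum_range_succ_inv_sq, ← hE, e₁, e₂, e₃, hA, hB]
  calc _ = ((n + 1).choose (m + 1) : ℝ) *
        ((p * exp (-(s / n) * (1 - p)) + (1 - p) * exp (-(s / n) * -p)) * exp D) := by
        rw [exp_add, exp_add]; ring
    _ ≤ (n + 1).choose (m + 1) * (exp ((-(s / n)) ^ 2 / 8) * exp D) := by
        gcongr; exact bernoulli_mgf_le hp₀ hp₁ _
    _ = _ := by rw [exp_add]

section BoolSeq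

variable {n : ℕ}

def trueCount (v : Fin n → Bool) : ℕ := #{i | v i}

def suffixCount (v : Fin n → Bool) (t : ℕ) : ℕ := #{i : Fin n | t ≤ (i : ℕ) ∧ v i}

noncomputable def suffixFrac (v : Fin n → Bool) (t : ℕ) : ℝ := suffixCount v t / ((n : ℝ) - t)

@[simp] lemma suffixCount_zero (v : Fin n → Bool) : suffixCount v 0 = trueCount v := by
  simp [suffixCount, trueCount]

lemma suffixFrac_zero (v : Fin n → Bool) : suffixFrac v 0 = trueCount v / n := by
  simp [suffixFrac]

lemma trueCount_le (v : Fin n → Bool) : trueCount v ≤ n :=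
  (card_filter_le _ _).trans_eq (card_fin n)

lemma trueCount_comp_perm (v : Fin n → Bool) (σ : Equiv.Perm (Fin n)) :
    trueCount (v ∘ σ) = trueCount v :=
  card_equiv σ fun i => by simp

lemma card_eq_false_add_trueCount (v : Fin n → Bool) : #{i | v i = false} + trueCount v = n := by
  have h := card_filter_add_card_filter_not (s := univ) (fun i : Fin n => v i = true)
  simp only [card_univ, Fintype.card_fin, Bool.not_eq_true] at h
  rw [trueCount]
  omega

lemma trueCount_not (v : Fin n → Bool) : trueCount (fun i => !v i) = n - trueCount v := by
  have h := card_eq_false_add_trueCount v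
  simp only [trueCount, Bool.not_eq_true'] at h ⊢
  omega

@[simp] lemma trueCount_cons_true (w : Fin n → Bool) :
    trueCount (Fin.cons true w : Fin (n + 1) → Bool) = trueCount w + 1 := by
  simp [trueCount, Fin.card_filter_univ_succ]

@[simp] lemma trueCount_cons_false (w : Fin n → Bool) :
    trueCount (Fin.cons false w : Fin (n + 1) → Bool) = trueCount w := by
  simp [trueCount, Fin.card_filter_univ_succ]

lemma suffixFrac_cons_succ (b : Bool) (w : Fin n → Bool) (t : ℕ) :
    suffixFrac (Fin.cons b w : Fin (n + 1) → Bool) (t + 1) = suffixFrac w t := by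
  simp [suffixFrac, suffixCount, Fin.card_filter_univ_succ]

lemma suffixCount_add_suffixCount_not (v : Fin n → Bool) (t : ℕ) :
    suffixCount v t + suffixCount (fun i => !v i) t = n - t := by
  have hge : #{i : Fin n | t ≤ (i : ℕ)} = n - t := by
    have h := card_filter_add_card_filter_not (s := univ) (fun i : Fin n => (i : ℕ) < t)
    simp only [Fin.card_filter_val_lt, not_lt, card_univ, Fintype.card_fin] at h
    omega
  have h := card_filter_add_card_filter_not (s := {i : Fin n | t ≤ (i : ℕ)})
    (fun i => v i = true)
  simp only [filter_filter, hge, Bool.not_eq_true] at h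
  simpa [suffixCount] using h

lemma suffixFrac_not (v : Fin n → Bool) {t : ℕ} (ht : t < n) :
    suffixFrac (fun i => !v i) t = 1 - suffixFrac v t := by
  have h := suffixCount_add_suffixCount_not v t
  have hnt : (0 : ℝ) < n - t := by rw [sub_pos]; exact_mod_cast ht
  rw [suffixFrac, suffixFrac, eq_sub_iff_add_eq, ← add_div, div_eq_one_iff_eq hnt.ne']
  have h' : ((suffixCount (fun i => !v i) t + suffixCount v t : ℕ) : ℝ) + t = n := by
    exact_mod_cast (by omega : suffixCount (fun i => !v i) t + suffixCount v t + t = n)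
  push_cast at h' ⊢
  linarith

lemma card_filter_fin_succ_bool (P : (Fin (n + 1) → Bool) → Prop) [DecidablePred P] :
    #{v | P v} = #{w : Fin n → Bool | P (Fin.cons true w)} + #{w | P (Fin.cons false w)} := by
  simp only [card_filter]
  rw [← (Fin.consEquiv fun _ => Bool).sum_comp, Fintype.sum_prod_type, Fintype.sum_bool]
  rfl

lemma card_trueCount_eq (n m : ℕ) : #{v : Fin n → Bool | trueCount v = m} = n.choose m := by
  induction n generalizing m with
  | zero => cases m <;> simp [trueCount]
  | succ n ih =>
    rw [card_filter_fin_succ_bool]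
    cases m with
    | zero => simp [ih]
    | succ m => simp [ih, Nat.choose_succ_succ]

lemma card_trueCount_eq_and_le (m : ℕ) (P : (Fin n → Bool) → Prop) [DecidablePred P] :
    #{v : Fin n → Bool | trueCount v = m ∧ P v} ≤ n.choose m := by
  rw [← card_trueCount_eq]
  exact card_le_card (monotone_filter_right _ fun _ _ h => h.1)

lemma exists_perm_comp_eq {v w : Fin n → Bool} (h : trueCount v = trueCount w) :
    ∃ τ : Equiv.Perm (Fin n), w ∘ τ = v := by
  have hc : ∀ c, Fintype.card {a // v a = c} = Fintype.card {a // w a = c} := by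
    rintro (_ | _) <;> simp only [Fintype.card_subtype]
    · have hv := card_eq_false_add_trueCount v
      have hw := card_eq_false_add_trueCount w
      omega
    · exact h
  exact ⟨Equiv.ofFiberEquiv fun c => Fintype.equivOfCardEq (hc c),
    funext (Equiv.ofFiberEquiv_map _)⟩

end BoolSeq

section Transfer

variable {n : ℕ}

lemma card_comp_perm_eq_of_trueCount_eq (f : Fin n → Bool) {v : Fin n → Bool}
    (hv : trueCount v = trueCount f) :
    #{σ : Equiv.Perm (Fin n) | f ∘ σ = v} = #{σ : Equiv.Perm (Fin n) | f ∘ σ = f} := by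
  obtain ⟨τ, rfl⟩ := exists_perm_comp_eq hv
  refine card_equiv (Equiv.mulRight τ⁻¹) fun σ => ?_
  simp only [mem_filter, mem_univ, true_and, Equiv.coe_mulRight, Equiv.Perm.coe_mul,
    Equiv.Perm.inv_def, ← Function.comp_assoc, Equiv.comp_symm_eq]

lemma card_comp_perm_filter (f : Fin n → Bool) (P : (Fin n → Bool) → Prop) [DecidablePred P] :
    #{σ : Equiv.Perm (Fin n) | P (f ∘ σ)}
      = #{v | trueCount v = trueCount f ∧ P v} * #{σ : Equiv.Perm (Fin n) | f ∘ σ = f} := by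
  rw [card_eq_sum_card_fiberwise (f := fun σ : Equiv.Perm (Fin n) => f ∘ σ)
    (t := {v | trueCount v = trueCount f ∧ P v}), ← smul_eq_mul, ← sum_const]
  · refine sum_congr rfl fun v hv => ?_
    rw [mem_filter] at hv
    rw [← card_comp_perm_eq_of_trueCount_eq f hv.2.1, filter_filter]
    congr 1
    refine filter_congr fun σ _ => ⟨And.right, fun h => ⟨h ▸ hv.2.2, h⟩⟩
  · intro σ hσ
    simp only [coe_filter, mem_univ, true_and, Set.mem_ofPred_eq] at hσ ⊢
    exact ⟨trueCount_comp_perm f σ, hσ⟩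

theorem card_comp_perm_filter_mul_choose (f : Fin n → Bool) (P : (Fin n → Bool) → Prop)
    [DecidablePred P] :
    #{σ : Equiv.Perm (Fin n) | P (f ∘ σ)} * n.choose (trueCount f)
      = #{v | trueCount v = trueCount f ∧ P v} * n.factorial := by
  have h := card_comp_perm_filter f fun _ => True
  simp only [and_true, filter_true, card_univ, Fintype.card_perm, Fintype.card_fin,
    card_trueCount_eq] at h
  rw [card_comp_perm_filter, h]
  ring

end Transfer

lemma exists_le_succ_suffixFrac_cons_iff {n T : ℕ} {θ : ℝ} {b : Bool} {w : Fin n → Bool}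
    (hθ : suffixFrac (Fin.cons b w : Fin (n + 1) → Bool) 0 < θ) :
    (∃ t ≤ T + 1, θ ≤ suffixFrac (Fin.cons b w : Fin (n + 1) → Bool) t)
      ↔ ∃ t ≤ T, θ ≤ suffixFrac w t := by
  constructor
  · rintro ⟨_ | t, ht, h⟩
    · exact absurd h hθ.not_ge
    · exact ⟨t, by omega, by rwa [suffixFrac_cons_succ] at h⟩
  · rintro ⟨t, ht, h⟩
    exact ⟨t + 1, by omega, by rwa [suffixFrac_cons_succ]⟩

theorem card_exists_suffixFrac_ge_le {s : ℝ} (hs : 0 ≤ s) (θ : ℝ) {T n : ℕ} (hT : T < n)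
    (m : ℕ) :
    (#{v : Fin n → Bool | trueCount v = m ∧ ∃ t ≤ T, θ ≤ suffixFrac v t} : ℝ)
      ≤ maximalBound s θ n m T := by
  induction T generalizing n m with
  | zero =>
    rcases le_or_gt θ (m / n) with hθ | hθ
    · exact (Nat.cast_le.2 (card_trueCount_eq_and_le m _)).trans (choose_le_maximalBound hs hθ 0)
    · rw [filter_false_of_mem]
      · simpa using maximalBound_nonneg s θ n m 0
      rintro v - ⟨rfl, t, ht, h⟩
      rw [Nat.le_zero.1 ht, suffixFrac_zero] at h
      exact h.not_gt hθ
  | succ T ih =>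
    obtain ⟨n, rfl⟩ : ∃ n', n = n' + 1 := ⟨n - 1, by omega⟩
    rcases le_or_gt θ (m / (n + 1 : ℕ)) with hθ | hθ
    · exact (Nat.cast_le.2 (card_trueCount_eq_and_le m _)).trans (choose_le_maximalBound hs hθ _)
    have hcons : ∀ b, #{w : Fin n → Bool | trueCount (Fin.cons b w : Fin (n + 1) → Bool) = m ∧
          ∃ t ≤ T + 1, θ ≤ suffixFrac (Fin.cons b w : Fin (n + 1) → Bool) t}
        = #{w : Fin n → Bool | trueCount (Fin.cons b w : Fin (n + 1) → Bool) = m ∧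
          ∃ t ≤ T, θ ≤ suffixFrac w t} := fun b => by
      refine congrArg card (filter_congr fun w _ => and_congr_right fun hw => ?_)
      exact exists_le_succ_suffixFrac_cons_iff (by rwa [suffixFrac_zero, hw])
    have ih' := ih (n := n) (by omega)
    rw [card_filter_fin_succ_bool, hcons, hcons, Nat.cast_add]
    simp only [trueCount_cons_true, trueCount_cons_false]
    cases m with
    | zero =>
      simpa using (ih' 0).trans (maximalBound_zero_le s θ n T)
    | succ m =>
      simp only [Nat.add_right_cancel_iff]
      exact (add_le_add (ih' m) (ih' (m + 1))).trans
        (maximalBound_add_maximalBound_le s θ (by omega) m T)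

lemma maximalBound_le_exp {n' : ℕ} (hn' : 0 < n') (m : ℕ) (α : ℝ) :
    maximalBound (4 * α * n') (m / (2 * n' : ℕ) + α) (2 * n') m n'
      ≤ (2 * n').choose m * exp (-(2 * α ^ 2 * n')) := by
  have hn : (0 : ℝ) < n' := by exact_mod_cast hn'
  have hsum : ∑ u ∈ range n', 1 / (((2 * n' : ℕ) : ℝ) - 1 - u) ^ 2
      ≤ n' * (1 / (n' : ℝ) ^ 2) := by
    refine (sum_le_card_nsmul _ _ _ fun u hu => ?_).trans_eq
      (by rw [card_range, nsmul_eq_mul])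
    have hu : (u : ℝ) + 1 ≤ n' := by exact_mod_cast mem_range.1 hu
    gcongr
    push_cast
    linarith
  unfold maximalBound
  gcongr
  calc _ ≤ 4 * α * n' * (m / (2 * n' : ℕ) - (m / (2 * n' : ℕ) + α))
        + (4 * α * n') ^ 2 / 8 * (n' * (1 / (n' : ℝ) ^ 2)) := by gcongr
    _ = -(2 * α ^ 2 * n') := by field_simp; ring

lemma card_exists_suffixFrac_ge_add_le {n' : ℕ} (hn' : 0 < n') (m : ℕ) {α : ℝ} (hα : 0 ≤ α) :
    (#{v : Fin (2 * n') → Bool | trueCount v = m ∧ ∃ t ≤ n', suffixFrac v 0 + α ≤ suffixFrac v t}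
      : ℝ) ≤ (2 * n').choose m * exp (-(2 * α ^ 2 * n')) := by
  have h := card_exists_suffixFrac_ge_le (by positivity : 0 ≤ 4 * α * n') (m / (2 * n' : ℕ) + α)
    (by omega : n' < 2 * n') m
  refine le_trans (le_of_eq ?_) (h.trans (maximalBound_le_exp hn' m α))
  congr 2
  refine filter_congr fun v _ => and_congr_right fun hv => ?_
  rw [suffixFrac_zero, hv]

lemma card_exists_suffixFrac_le_sub_le {n' m : ℕ} (hn' : 0 < n') (hm : m ≤ 2 * n') {α : ℝ}
    (hα : 0 ≤ α) :
    (#{v : Fin (2 * n') → Bool | trueCount v = m ∧ ∃ t ≤ n', suffixFrac v t ≤ suffixFrac v 0 - α}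
      : ℝ) ≤ (2 * n').choose m * exp (-(2 * α ^ 2 * n')) := by
  rw [← Nat.choose_symm hm]
  refine le_trans (le_of_eq ?_) (card_exists_suffixFrac_ge_add_le hn' (2 * n' - m) hα)
  congr 1
  refine card_equiv (Function.Involutive.toPerm (fun (v : Fin (2 * n') → Bool) i => !v i)
    fun v => by simp) fun v => ?_
  show _ ↔ (fun i => !v i) ∈ _
  have hv := trueCount_le v
  simp only [mem_filter, mem_univ, true_and, trueCount_not]
  refine and_congr (by omega) (exists_congr fun t => and_congr_right fun ht => ?_)
  rw [suffixFrac_not v (by omega), suffixFrac_not v (by omega)]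
  constructor <;> intro h <;> linarith

theorem card_exists_abs_suffixFrac_sub_ge_le {n' m : ℕ} (hn' : 0 < n') (hm : m ≤ 2 * n') {α : ℝ}
    (hα : 0 ≤ α) :
    (#{v : Fin (2 * n') → Bool |
        trueCount v = m ∧ ∃ t ≤ n', α ≤ |suffixFrac v t - suffixFrac v 0|} : ℝ)
      ≤ 2 * (2 * n').choose m * exp (-(2 * α ^ 2 * n')) := by
  calc _ ≤ (#{v : Fin (2 * n') → Bool |
          (trueCount v = m ∧ ∃ t ≤ n', suffixFrac v 0 + α ≤ suffixFrac v t) ∨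
          (trueCount v = m ∧ ∃ t ≤ n', suffixFrac v t ≤ suffixFrac v 0 - α)} : ℝ) := by
        refine Nat.cast_le.2 (card_le_card (monotone_filter_right _ fun v _ => ?_))
        rintro ⟨hc, t, ht, h⟩
        rcases le_abs'.1 h with h | h
        · exact Or.inr ⟨hc, t, ht, by linarith⟩
        · exact Or.inl ⟨hc, t, ht, by linarith⟩
    _ ≤ _ := by
        rw [filter_or]
        refine (Nat.cast_le.2 (card_union_le _ _)).trans ?_
        push_cast
        linarith [card_exists_suffixFrac_ge_add_le hn' m hα,
          card_exists_suffixFrac_le_sub_le hn' hm hα]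

theorem card_perm_exists_abs_suffixFrac_sub_ge_le {n' : ℕ} (hn' : 0 < n')
    (f : Fin (2 * n') → Bool) {α : ℝ} (hα : 0 ≤ α) :
    (#{σ : Equiv.Perm (Fin (2 * n')) |
        ∃ t ≤ n', α ≤ |suffixFrac (f ∘ σ) t - suffixFrac (f ∘ σ) 0|} : ℝ)
      ≤ 2 * (2 * n').factorial * exp (-(2 * α ^ 2 * n')) := by
  have h := congrArg (Nat.cast (R := ℝ))
    (card_comp_perm_filter_mul_choose f
      fun v => ∃ t ≤ n', α ≤ |suffixFrac v t - suffixFrac v 0|)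
  push_cast at h
  have hC : (0 : ℝ) < (2 * n').choose (trueCount f) :=
    Nat.cast_pos.2 (Nat.choose_pos (trueCount_le f))
  refine le_of_mul_le_mul_right ?_ hC
  rw [h]
  calc _ ≤ 2 * (2 * n').choose (trueCount f) * exp (-(2 * α ^ 2 * n'))
        * (2 * n').factorial := by
        gcongr
        exact card_exists_abs_suffixFrac_sub_ge_le hn' (trueCount_le f) hα
    _ = _ := by ring

lemma card_filter_exists_le_sum {α ι : Type*} [Fintype ι] (s : Finset α) (P : ι → α → Prop)
    [∀ i, DecidablePred (P i)] [DecidablePred fun a => ∃ i, P i a] :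
    #{a ∈ s | ∃ i, P i a} ≤ ∑ i, #{a ∈ s | P i a} := by
  refine (card_le_card fun a ha => ?_).trans card_biUnion_le
  obtain ⟨has, i, hi⟩ := mem_filter.1 ha
  exact mem_biUnion.2 ⟨i, mem_univ _, mem_filter.2 ⟨has, hi⟩⟩

def leIndicator {N B : ℕ} (x : Fin N → Fin B) (j : Fin B) (a : Fin N) : Bool := decide (x a ≤ j)

lemma pCDF_eq_suffixFrac (B n' : ℕ) (x : Fin (2 * n') → Fin B) (σ : Equiv.Perm (Fin (2 * n')))
    (t : ℕ) (j : Fin B) : pCDF B n' x σ t j = suffixFrac (leIndicator x j ∘ σ) t := by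
  simp [pCDF, suffixFrac, suffixCount, leIndicator]

theorem badProb_le (B : ℕ) {n' : ℕ} (hn' : 0 < n') (x : Fin (2 * n') → Fin B) {α : ℝ}
    (hα : 0 ≤ α) : badProb B n' x α ≤ 2 * B * exp (-(2 * α ^ 2 * n')) := by
  rw [badProb, card_univ, Fintype.card_perm, Fintype.card_fin, div_le_iff₀ (by positivity)]
  simp only [pCDF_eq_suffixFrac]
  calc _ ≤ ∑ j : Fin B, (#{σ : Equiv.Perm (Fin (2 * n')) | ∃ t ≤ n',
        α ≤ |suffixFrac (leIndicator x j ∘ σ) t - suffixFrac (leIndicator x j ∘ σ) 0|} : ℝ) := by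
        rw [← Nat.cast_sum]
        exact Nat.cast_le.2 (card_filter_exists_le_sum _ _)
    _ ≤ ∑ _j : Fin B, 2 * (2 * n').factorial * exp (-(2 * α ^ 2 * n')) :=
        sum_le_sum fun j _ => card_perm_exists_abs_suffixFrac_sub_ge_le hn' _ hα
    _ = _ := by simp only [sum_const, card_univ, Fintype.card_fin, nsmul_eq_mul]; ring

lemma two_mul_mul_exp_neg_le_rpow_neg {B a lam : ℝ} (hB : 2 ≤ B) (h : (lam + 2) * log B ≤ a) :
    2 * B * exp (-a) ≤ B ^ (-lam) := by
  have hB₀ : 0 < B := by linarith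
  have hstep : ∀ c : ℝ, B * B ^ (-(c + 1)) = B ^ (-c) := fun c => by
    rw [show -c = 1 + -(c + 1) by ring, rpow_add hB₀, rpow_one]
  calc 2 * B * exp (-a) ≤ 2 * B * B ^ (-(lam + 1 + 1)) := by
        rw [rpow_def_of_pos hB₀]
        gcongr
        linarith
    _ = 2 * B ^ (-(lam + 1)) := by rw [mul_assoc, hstep]
    _ ≤ B * B ^ (-(lam + 1)) := by gcongr
    _ = B ^ (-lam) := hstep lam

/-- with `n = 2 * n'` users, the probability that the empirical CDF of the
remaining users after removing the first `t ≤ n/2` (in a uniformly random order) deviates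
anywhere by at least `α` from the initial empirical CDF is at most `2B·exp(-α²n/2)`;
in particular, if `n ≥ C·log B/α²` for a sufficiently large constant `C`, this failure
probability is at most `B^{-λ}`, where `λ` can be made arbitrarily large by increasing `C`. -/
theorem stmt_3 :
    (∀ (B n' : ℕ), 2 ≤ B → 1 ≤ n' → ∀ (x : Fin (2 * n') → Fin B) (α : ℝ), 0 < α →
      badProb B n' x α ≤ 2 * (B : ℝ) * Real.exp (-(α ^ 2) * (2 * (n' : ℝ)) / 2))
    ∧ (∀ lam : ℝ, 0 < lam → ∃ C : ℝ, 0 < C ∧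
        ∀ (B n' : ℕ), 2 ≤ B → 1 ≤ n' → ∀ (x : Fin (2 * n') → Fin B) (α : ℝ), 0 < α →
          C * Real.log B / α ^ 2 ≤ 2 * (n' : ℝ) →
          badProb B n' x α ≤ (B : ℝ) ^ (-lam)) := by
  refine ⟨fun B n' _ hn' x α hα => (badProb_le B hn' x hα.le).trans ?_,
    fun lam hlam => ⟨lam + 2, by linarith, fun B n' hB hn' x α hα hC => ?_⟩⟩
  · gcongr
    nlinarith [sq_nonneg α]
  · refine (badProb_le B hn' x hα.le).trans
      (two_mul_mul_exp_neg_le_rpow_neg (by exact_mod_cast hB) ?_)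
    rw [div_le_iff₀ (by positivity)] at hC
    linarith
end

section
/- Let B ≥ 2, let D be a multiset of n elements of {1,…,B}, let τ ∈ (0,1) with τn and (1−τ)n integers, and let α ∈ (0,1/2). Let D_P be the multiset obtained from D by adding (1−τ)n copies of the value 1 and τn copies of the value B. Suppose m_P ∈ {1,…,B} satisfies F_{D_P}(m_P) < 1/2 + α and F_{D_P}(m_P + 1) > 1/2 − α (an α-approximate median of D_P). Then m_P ≠ B, and F_D(m_P) < τ + 2α and F_D(m_P + 1) > τ − 2α; that is, m_P is a 2α-approximate τ-quantile of D. -/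
/-!
Padding `D` with `(1 - τ) n` copies of `1` and `τ n` copies of `B` doubles its size and, below `B`,
shifts its CDF by exactly `(1 - τ) n` points, so `F_{D_P} y = (F_D y + 1 - τ) / 2` for `1 ≤ y < B`.
An `α`-approximate median of `D_P` therefore becomes a `2α`-approximate `τ`-quantile of `D`.
It cannot be `B`, where `F_{D_P} = 1 ≥ 1/2 + α`.
-/

noncomputable def ecdf (S : Multiset ℕ) (y : ℕ) : ℝ :=
  ((S.filter (fun z => z ≤ y)).card : ℝ) / (S.card : ℝ)

lemma ecdf_eq_one_of_forall_le {S : Multiset ℕ} {y : ℕ} (hS : S ≠ 0) (h : ∀ x ∈ S, x ≤ y) :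
    ecdf S y = 1 := by
  rw [ecdf, Multiset.filter_eq_self.mpr h]
  exact div_self (by exact_mod_cast Multiset.card_pos.mpr hS |>.ne')

lemma card_filter_le_replicate_of_le {m x y : ℕ} (h : x ≤ y) :
    ((Multiset.replicate m x).filter (fun z => z ≤ y)).card = m := by
  rw [Multiset.filter_eq_self.mpr fun z hz => Multiset.eq_of_mem_replicate hz ▸ h,
    Multiset.card_replicate]

lemma card_filter_le_replicate_of_lt {m x y : ℕ} (h : y < x) :
    ((Multiset.replicate m x).filter (fun z => z ≤ y)).card = 0 := by
  rw [Multiset.filter_eq_nil.mpr fun z hz => Multiset.eq_of_mem_replicate hz ▸ h.not_ge,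
    Multiset.card_zero]

lemma ecdf_pad_of_lt {D : Multiset ℕ} (hD : 0 < Multiset.card D) {τ : ℝ} {a k B y : ℕ}
    (ha : (a : ℝ) = (1 - τ) * Multiset.card D) (hk : (k : ℝ) = τ * Multiset.card D)
    (hy : 1 ≤ y) (hyB : y < B) :
    ecdf (D + Multiset.replicate a 1 + Multiset.replicate k B) y = (ecdf D y + (1 - τ)) / 2 := by
  have hn : (0 : ℝ) < Multiset.card D := by exact_mod_cast hD
  simp only [ecdf, Multiset.filter_add, Multiset.card_add, Multiset.card_replicate,
    card_filter_le_replicate_of_le hy, card_filter_le_replicate_of_lt hyB]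
  push_cast
  rw [ha, hk]
  field_simp
  ring

theorem stmt_5_general (B n : ℕ) (hn : 0 < n) (D : Multiset ℕ)
    (hD : ∀ x ∈ D, x ∈ Finset.Icc 1 B) (hcard : Multiset.card D = n)
    (τ α : ℝ) (hτ : τ ∈ Set.Ioo (0 : ℝ) 1) (hα : α ∈ Set.Ioo (0 : ℝ) (1 / 2))
    (a k : ℕ) (ha : (a : ℝ) = (1 - τ) * n) (hk : (k : ℝ) = τ * n)
    (mP : ℕ) (hmP : mP ∈ Finset.Icc 1 B) :
    let F : Multiset ℕ → ℕ → ℝ := fun S y =>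
      ((S.filter (fun z => z ≤ y)).card : ℝ) / (S.card : ℝ)
    let DP : Multiset ℕ := D + Multiset.replicate a 1 + Multiset.replicate k B
    F DP mP < 1 / 2 + α → F DP (mP + 1) > 1 / 2 - α →
      mP ≠ B ∧ F D mP < τ + 2 * α ∧ F D (mP + 1) > τ - 2 * α := by
  intro F DP hlo hhi
  change ecdf DP mP < _ at hlo
  change ecdf DP (mP + 1) > _ at hhi
  change _ ∧ ecdf D mP < _ ∧ ecdf D (mP + 1) > _
  obtain ⟨hmP1, hmPB⟩ := Finset.mem_Icc.mp hmP
  subst hcard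
  have hD_le : ∀ x ∈ D, x ≤ B := fun x hx => (Finset.mem_Icc.mp (hD x hx)).2
  have hD0 : D ≠ 0 := Multiset.card_pos.mp hn
  have hmP_ne : mP ≠ B := by
    rintro rfl
    have hDP_le : ∀ x ∈ DP, x ≤ mP := by
      simp only [DP, Multiset.mem_add, Multiset.mem_replicate]
      rintro x ((hx | ⟨-, rfl⟩) | ⟨-, rfl⟩)
      · exact hD_le x hx
      · exact hmP1
      · exact le_rfl
    rw [ecdf_eq_one_of_forall_le (by simp [DP, hD0]) hDP_le] at hlo
    linarith [hα.2]
  have hmP_lt : mP < B := lt_of_le_of_ne hmPB hmP_ne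
  refine ⟨hmP_ne, ?_, ?_⟩
  · rw [ecdf_pad_of_lt hn ha hk hmP1 hmP_lt] at hlo
    linarith
  · rcases (Nat.succ_le_of_lt hmP_lt).eq_or_lt with hB | hB
    · rw [ecdf_eq_one_of_forall_le hD0 fun x hx => (hD_le x hx).trans_eq hB.symm]
      linarith [hτ.2, hα.1]
    · rw [ecdf_pad_of_lt hn ha hk (Nat.le_succ_of_le hmP1) hB] at hhi
      linarith

/-- an `α`-approximate median of the padded dataset `D_P` is a
`2α`-approximate `τ`-quantile of `D`, and it is never equal to `B`. -/
theorem stmt_5 (B n : ℕ) (hB : 2 ≤ B) (hn : 0 < n) (D : Multiset ℕ)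
    (hD : ∀ x ∈ D, x ∈ Finset.Icc 1 B) (hcard : Multiset.card D = n)
    (τ α : ℝ) (hτ : τ ∈ Set.Ioo (0 : ℝ) 1) (hα : α ∈ Set.Ioo (0 : ℝ) (1 / 2))
    (a k : ℕ) (ha : (a : ℝ) = (1 - τ) * n) (hk : (k : ℝ) = τ * n)
    (mP : ℕ) (hmP : mP ∈ Finset.Icc 1 B) :
    let F : Multiset ℕ → ℕ → ℝ := fun S y =>
      ((S.filter (fun z => z ≤ y)).card : ℝ) / (S.card : ℝ)
    let DP : Multiset ℕ := D + Multiset.replicate a 1 + Multiset.replicate k B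
    F DP mP < 1 / 2 + α → F DP (mP + 1) > 1 / 2 - α →
      mP ≠ B ∧ F D mP < τ + 2 * α ∧ F D (mP + 1) > τ - 2 * α :=
  stmt_5_general B n hn D hD hcard τ α hτ hα a k ha hk mP hmP
end
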